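/- arXiv:2401.09270 — 5 statements merged into one kernel-verified Lean document; each statement's English description precedes it below -/
import Mathlib

section
/- If types K and J are searchable, then their binary product K × J is searchable. -/
/-- A type `K` is searchable if for every decidable predicate `p : K → Prop` there
exists `k₀ : K` such that `(∃ k, p k) → p k₀`. -/
def Searchable (K : Type*) : Prop :=
  ∀ (p : K → Prop), (∀ k, Decidable (p k)) → ∃ k₀, (∃ k, p k) → p k₀

theorem Searchable.of_surjective {K L : Type*} (hK : Searchable K) {f : K → L}
    (hf : Function.Surjective f) : Searchable L := by
  intro p hp
  obtain ⟨k₀, hk₀⟩ := hK (p ∘ f) (fun k => hp (f k))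
  refine ⟨f k₀, fun ⟨l, hl⟩ => hk₀ ?_⟩
  obtain ⟨k, rfl⟩ := hf l
  exact ⟨k, hl⟩

theorem Searchable.sigma {K : Type*} {J : K → Type*} (hK : Searchable K)
    (hJ : ∀ k, Searchable (J k)) : Searchable (Σ k, J k) := by
  intro p hp
  choose f hf using fun k => hJ k (fun j => p ⟨k, j⟩) (fun j => hp ⟨k, j⟩)
  obtain ⟨k₀, hk₀⟩ := hK (fun k => p ⟨k, f k⟩) (fun k => hp ⟨k, f k⟩)
  exact ⟨⟨k₀, f k₀⟩, fun ⟨⟨k, j⟩, hkj⟩ => hk₀ ⟨k, hf k ⟨j, hkj⟩⟩⟩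

/-- If `K` and `J` are searchable, then so is `K × J`. -/
theorem searchable_prod {K J : Type*} (hK : Searchable K) (hJ : Searchable J) :
    Searchable (K × J) :=
  (hK.sigma fun _ => hJ).of_surjective (Equiv.sigmaEquivProd K J).surjective
end

section
/- Tychonoff theorem for uniformly continuously searchable types: if T : ℕ → Type is a family of uniformly continuously searchable closeness spaces, then the countable product Π T, equipped with the countable product closeness function, is uniformly continuously searchable. -/
/-! Induction on the modulus `δ` of the predicate `p`. For `δ = 0` the predicate is constant and
any point is a witness. For `δ + 1`, fixing the head `x` leaves a predicate on the tail product with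
modulus `δ`, so by induction it has a witness `ε x`; the predicate `x ↦ p (x :: ε x)` on the head
space then has modulus `δ + 1`, and searching the head space for it yields the witness
`x₀ :: ε x₀`. -/

universe u

/-- The countable product closeness function, defined diagonally:
`c(α,β)(0) = c₀(α₀,β₀)(0)` and
`c(α,β)(n+1) = min (c₀(α₀,β₀)(n+1)) (c_tail(tail α, tail β)(n))`. -/
def prodC : {T : ℕ → Type u} → (∀ n, T n → T n → ℕ → Bool) →
    (∀ n, T n) → (∀ n, T n) → ℕ → Bool
  | _, cs, α, β, 0 => cs 0 (α 0) (β 0) 0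
  | T, cs, α, β, n + 1 =>
      min (cs 0 (α 0) (β 0) (n + 1))
        (prodC (T := fun k => T (k + 1)) (fun k => cs (k + 1))
          (fun k => α (k + 1)) (fun k => β (k + 1)) n)

def IsModulus {X : Type u} (c : X → X → ℕ → Bool) (p : X → Prop) (δ : ℕ) : Prop :=
  ∀ x y, (∀ i, i < δ → c x y i = true) → (p x ↔ p y)

def UCSearchable {X : Type u} (c : X → X → ℕ → Bool) : Prop :=
  ∀ p : X → Prop, (∀ x, Decidable (p x)) → (∃ δ, IsModulus c p δ) → ∃ x₀, (∃ x, p x) → p x₀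

def natCons {T : ℕ → Type u} (x : T 0) (β : ∀ k, T (k + 1)) : ∀ n, T n
  | 0 => x
  | n + 1 => β n

theorem natCons_head_tail {T : ℕ → Type u} (α : ∀ n, T n) :
    natCons (α 0) (fun k => α (k + 1)) = α := by
  funext n; cases n <;> rfl

theorem prodC_self : ∀ (i : ℕ) {T : ℕ → Type u} (cs : ∀ n, T n → T n → ℕ → Bool),
    (∀ n (x : T n) j, cs n x x j = true) → ∀ α, prodC cs α α i = true
  | 0, _, _, hrefl, α => hrefl 0 (α 0) 0
  | i + 1, _, cs, hrefl, α => by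
    simp only [prodC, hrefl 0 (α 0) (i + 1),
      prodC_self i (fun k => cs (k + 1)) (fun n => hrefl (n + 1)) (fun k => α (k + 1))]
    rfl

theorem prodC_natCons_of_lt {T : ℕ → Type u} {cs : ∀ n, T n → T n → ℕ → Bool} {δ : ℕ}
    {x y : T 0} {β β' : ∀ k, T (k + 1)} (hxy : ∀ i, i < δ + 1 → cs 0 x y i = true)
    (hββ' : ∀ i, i < δ → prodC (fun k => cs (k + 1)) β β' i = true) :
    ∀ i, i < δ + 1 → prodC cs (natCons x β) (natCons y β') i = true
  | 0, hi => hxy 0 hi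
  | i + 1, hi => by
    show min (cs 0 x y (i + 1)) (prodC (fun k => cs (k + 1)) β β' i) = true
    rw [hxy (i + 1) hi, hββ' i (Nat.lt_of_succ_lt_succ hi)]
    rfl

theorem UCSearchable.nonempty {X : Type u} {c : X → X → ℕ → Bool}
    (h : UCSearchable c) : Nonempty X :=
  let ⟨x₀, _⟩ := h (fun _ => True) (fun _ => inferInstance) ⟨0, fun _ _ _ => Iff.rfl⟩
  ⟨x₀⟩

theorem exists_witness_of_isModulus_prodC_zero {T : ℕ → Type u}
    {cs : ∀ n, T n → T n → ℕ → Bool} [∀ n, Nonempty (T n)]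
    {p : (∀ n, T n) → Prop} (hmod : IsModulus (prodC cs) p 0) :
    ∃ α₀, (∃ α, p α) → p α₀ := by
  obtain ⟨α₀⟩ : Nonempty (∀ n, T n) := inferInstance
  exact ⟨α₀, fun ⟨α, hα⟩ => (hmod α α₀ fun i hi => absurd hi (Nat.not_lt_zero i)).mp hα⟩

theorem exists_witness_of_isModulus_prodC_succ {T : ℕ → Type u}
    {cs : ∀ n, T n → T n → ℕ → Bool} (hrefl : ∀ n (x : T n) j, cs n x x j = true)
    (hsearch₀ : UCSearchable (cs 0)) {p : (∀ n, T n) → Prop} (dec : ∀ α, Decidable (p α))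
    {δ : ℕ} (hmod : IsModulus (prodC cs) p (δ + 1))
    (htail : ∀ x, ∃ β₀, (∃ β, p (natCons x β)) → p (natCons x β₀)) :
    ∃ α₀, (∃ α, p α) → p α₀ := by
  choose ε hε using htail
  have hhead : ∀ x y, (∀ i, i < δ + 1 → cs 0 x y i = true) →
      ∀ β, p (natCons x β) ↔ p (natCons y β) := fun x y hxy β =>
    hmod _ _ (prodC_natCons_of_lt hxy fun i _ =>
      prodC_self i (fun k => cs (k + 1)) (fun n => hrefl (n + 1)) β)
  obtain ⟨x₀, hx₀⟩ := hsearch₀ (fun x => p (natCons x (ε x))) (fun x => dec _)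
    ⟨δ + 1, fun x y hxy =>
      ⟨fun hx => hε y ⟨ε x, (hhead x y hxy (ε x)).mp hx⟩,
        fun hy => hε x ⟨ε y, (hhead x y hxy (ε y)).mpr hy⟩⟩⟩
  refine ⟨natCons x₀ (ε x₀), fun ⟨α, hα⟩ => hx₀ ⟨α 0, hε (α 0) ⟨fun k => α (k + 1), ?_⟩⟩⟩
  rwa [natCons_head_tail]

theorem exists_witness_of_isModulus_prodC (δ : ℕ) : ∀ {T : ℕ → Type u}
    {cs : ∀ n, T n → T n → ℕ → Bool}, (∀ n (x : T n) j, cs n x x j = true) →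
    (∀ n, UCSearchable (cs n)) → ∀ {p : (∀ n, T n) → Prop}, (∀ α, Decidable (p α)) →
    IsModulus (prodC cs) p δ → ∃ α₀, (∃ α, p α) → p α₀ := by
  induction δ with
  | zero =>
    intro _ _ _ hsearch _ _ hmod
    have := fun n => (hsearch n).nonempty
    exact exists_witness_of_isModulus_prodC_zero hmod
  | succ δ ih =>
    intro T cs hrefl hsearch p dec hmod
    refine exists_witness_of_isModulus_prodC_succ hrefl (hsearch 0) dec hmod fun x => ?_
    refine ih (fun n => hrefl (n + 1)) (fun n => hsearch (n + 1)) (fun β => dec _) ?_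
    exact fun β β' hββ' => hmod _ _ (prodC_natCons_of_lt (fun i _ => hrefl 0 x i) hββ')

theorem ucSearchable_prodC {T : ℕ → Type u} {cs : ∀ n, T n → T n → ℕ → Bool}
    (hrefl : ∀ n (x : T n) j, cs n x x j = true) (hsearch : ∀ n, UCSearchable (cs n)) :
    UCSearchable (prodC cs) := fun _ dec ⟨δ, hmod⟩ =>
  exists_witness_of_isModulus_prodC δ hrefl hsearch dec hmod

theorem tychonoff_general {T : ℕ → Type u} (cs : ∀ n, T n → T n → ℕ → Bool)
    (heq : ∀ n (x y : T n), cs n x y = (fun _ => true) ↔ x = y)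
    (hsearch : ∀ n, ∀ (p : T n → Prop), (∀ x, Decidable (p x)) →
      (∃ δ : ℕ, ∀ x y, (∀ i, i < δ → cs n x y i = true) → (p x ↔ p y)) →
      ∃ x₀, (∃ x, p x) → p x₀) :
    ∀ (p : (∀ n, T n) → Prop), (∀ α, Decidable (p α)) →
      (∃ δ : ℕ, ∀ α β, (∀ i, i < δ → prodC cs α β i = true) → (p α ↔ p β)) →
      ∃ α₀, (∃ α, p α) → p α₀ :=
  ucSearchable_prodC (fun n x j => congrFun ((heq n x x).mpr rfl) j) hsearch

/-- Tychonoff theorem for uniformly continuously searchable closeness spaces: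
if each `T n` is a closeness space (via `cs n`) that is uniformly continuously
searchable, then the countable product `Π T`, with the countable product
closeness function, is uniformly continuously searchable. -/
theorem tychonoff {T : ℕ → Type u} (cs : ∀ n, T n → T n → ℕ → Bool)
    (hdec : ∀ n x y i, cs n x y (i + 1) = true → cs n x y i = true)
    (heq : ∀ n (x y : T n), cs n x y = (fun _ => true) ↔ x = y)
    (hsymm : ∀ n (x y : T n), cs n x y = cs n y x)
    (hultra : ∀ n (x y z : T n) i,
      min (cs n x y i) (cs n y z i) = true → cs n x z i = true)
    (hsearch : ∀ n, ∀ (p : T n → Prop), (∀ x, Decidable (p x)) →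
      (∃ δ : ℕ, ∀ x y, (∀ i, i < δ → cs n x y i = true) → (p x ↔ p y)) →
      ∃ x₀, (∃ x, p x) → p x₀) :
    ∀ (p : (∀ n, T n) → Prop), (∀ α, Decidable (p α)) →
      (∃ δ : ℕ, ∀ α β, (∀ i, i < δ → prodC cs α β i = true) → (p α ↔ p β)) →
      ∃ α₀, (∃ α, p α) → p α₀ :=
  tychonoff_general cs heq hsearch
end

section
/- In an iterative midpoint algebra (A, ⊕, M), any two functions M₁, M₂ : (ℕ → A) → A both satisfying the two iteration sub-properties are pointwise equal: M₁(α) = M₂(α) for all α. -/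
/-- The values of `M` on the tails of `α` solve the recurrence of the second iteration
property, which is why that property forces agreement with any `M` satisfying the first. -/
theorem tail_eq_op_tail {A : Type*} (op : A → A → A) (M : (ℕ → A) → A)
    (hM : ∀ α : ℕ → A, M α = op (α 0) (M (fun n => α (n + 1))))
    (α : ℕ → A) (i : ℕ) :
    M (fun n => α (n + i)) = op (α i) (M (fun n => α (n + (i + 1)))) := by
  rw [hM]
  simp only [zero_add, add_right_comm _ 1 i, add_assoc]

theorem iterative_uniqueness_general {A : Type*} (op : A → A → A)
    (M₁ M₂ : (ℕ → A) → A)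
    (hM₁2 : ∀ α β : ℕ → A, (∀ i, β i = op (α i) (β (i + 1))) → β 0 = M₁ α)
    (hM₂1 : ∀ α : ℕ → A, M₂ α = op (α 0) (M₂ (fun n => α (n + 1)))) :
    ∀ α : ℕ → A, M₁ α = M₂ α := by
  intro α
  simpa using (hM₁2 α (fun i => M₂ fun n => α (n + i)) (tail_eq_op_tail op M₂ hM₂1 α)).symm

/-- In an iterative midpoint algebra, any two operators `M₁, M₂` satisfying the
two iteration sub-properties are pointwise equal. -/
theorem iterative_uniqueness {A : Type*} (op : A → A → A)
    (hidem : ∀ a, op a a = a)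
    (hcomm : ∀ a b, op a b = op b a)
    (htransp : ∀ a b c d, op (op a b) (op c d) = op (op a c) (op b d))
    (M₁ M₂ : (ℕ → A) → A)
    (hM₁1 : ∀ α : ℕ → A, M₁ α = op (α 0) (M₁ (fun n => α (n + 1))))
    (hM₁2 : ∀ α β : ℕ → A, (∀ i, β i = op (α i) (β (i + 1))) → β 0 = M₁ α)
    (hM₂1 : ∀ α : ℕ → A, M₂ α = op (α 0) (M₂ (fun n => α (n + 1))))
    (hM₂2 : ∀ α β : ℕ → A, (∀ i, β i = op (α i) (β (i + 1))) → β 0 = M₂ α) :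
    ∀ α : ℕ → A, M₁ α = M₂ α :=
  iterative_uniqueness_general op M₁ M₂ hM₁2 hM₂1
end

section
/- In a transpositional magma (A, ⊕) that is iterative via M, the operator M satisfies the homomorphic property: M(θ) ⊕ M(ζ) = M(λ i, θ(i) ⊕ ζ(i)) for all sequences θ, ζ : ℕ → A. -/
/-!
The sequence of tail pairs `i ↦ M (θ shifted by i) ⊕ M (ζ shifted by i)` unfolds, by the
recursion for `M` and transposition, as `(θ i ⊕ ζ i) ⊕ (next term)`. It is therefore a
solution of the recursion defining `M (θ ⊕ ζ)`, and uniqueness identifies its first term,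
`M θ ⊕ M ζ`, with `M (θ ⊕ ζ)`.
-/

section Iterative

variable {A : Type*} (op : A → A → A) (M : (ℕ → A) → A)

theorem iterative_unfold_shift
    (hM1 : ∀ α : ℕ → A, M α = op (α 0) (M (fun n => α (n + 1)))) (α : ℕ → A) (i : ℕ) :
    M (fun n => α (n + i)) = op (α i) (M (fun n => α (n + (i + 1)))) := by
  rw [hM1]
  simp only [zero_add, Nat.add_right_comm _ 1 i, Nat.add_assoc]

theorem op_iterative_shift_unfold
    (htransp : ∀ a b c d, op (op a b) (op c d) = op (op a c) (op b d))
    (hM1 : ∀ α : ℕ → A, M α = op (α 0) (M (fun n => α (n + 1)))) (θ ζ : ℕ → A) (i : ℕ) :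
    op (M (fun n => θ (n + i))) (M (fun n => ζ (n + i))) =
      op (op (θ i) (ζ i)) (op (M (fun n => θ (n + (i + 1)))) (M (fun n => ζ (n + (i + 1))))) := by
  rw [iterative_unfold_shift op M hM1 θ, iterative_unfold_shift op M hM1 ζ, htransp]

end Iterative

/-- In a transpositional magma that is iterative via `M`, the operator `M`
satisfies the homomorphic property
`M θ ⊕ M ζ = M (λ i, θ i ⊕ ζ i)`. -/
theorem M_hom {A : Type*} (op : A → A → A)
    (htransp : ∀ a b c d, op (op a b) (op c d) = op (op a c) (op b d))
    (M : (ℕ → A) → A)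
    (hM1 : ∀ α : ℕ → A, M α = op (α 0) (M (fun n => α (n + 1))))
    (hM2 : ∀ α β : ℕ → A, (∀ i, β i = op (α i) (β (i + 1))) → β 0 = M α) :
    ∀ θ ζ : ℕ → A, op (M θ) (M ζ) = M (fun i => op (θ i) (ζ i)) := by
  intro θ ζ
  simpa using hM2 (fun i => op (θ i) (ζ i))
    (fun i => op (M (fun n => θ (n + i))) (M (fun n => ζ (n + i))))
    (op_iterative_shift_unfold op M htransp hM1 θ ζ)
end

section
/- In an iterative midpoint algebra (A, ⊕, M), every midpoint homomorphism h : A → A (i.e., h(a ⊕ b) = h(a) ⊕ h(b)) is an M-homomorphism: h(M(α)) = M(λ n, h(α(n))) for every sequence α : ℕ → A. -/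
/-! Applying `h` to the tails `M (α (· + i))` of `α` gives a sequence satisfying the defining
recursion of `M (h ∘ α)`, so the uniqueness half of the iteration property identifies its
first term `h (M α)` with `M (h ∘ α)`. -/

theorem M_tail_eq_op {A : Type*} (op : A → A → A) (M : (ℕ → A) → A)
    (hM1 : ∀ α : ℕ → A, M α = op (α 0) (M (fun n => α (n + 1))))
    (α : ℕ → A) (i : ℕ) :
    M (fun n => α (n + i)) = op (α i) (M (fun n => α (n + (i + 1)))) := by
  rw [hM1 (fun n => α (n + i))]
  simp only [Nat.zero_add, Nat.add_right_comm _ 1 i, Nat.add_assoc]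

theorem midpoint_hom_is_M_hom_general {A : Type*} (op : A → A → A)
    (M : (ℕ → A) → A)
    (hM1 : ∀ α : ℕ → A, M α = op (α 0) (M (fun n => α (n + 1))))
    (hM2 : ∀ α β : ℕ → A, (∀ i, β i = op (α i) (β (i + 1))) → β 0 = M α)
    (h : A → A)
    (hhom : ∀ a b, h (op a b) = op (h a) (h b)) :
    ∀ α : ℕ → A, h (M α) = M (fun n => h (α n)) := by
  intro α
  have tails_recursion : ∀ i, h (M (fun n => α (n + i))) =
      op (h (α i)) (h (M (fun n => α (n + (i + 1))))) := fun i => by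
    rw [M_tail_eq_op op M hM1, hhom]
  simpa using hM2 _ _ tails_recursion

/-- In an iterative midpoint algebra, every midpoint homomorphism is an
`M`-homomorphism: `h (M α) = M (λ n, h (α n))`. -/
theorem midpoint_hom_is_M_hom {A : Type*} (op : A → A → A)
    (hidem : ∀ a, op a a = a)
    (hcomm : ∀ a b, op a b = op b a)
    (htransp : ∀ a b c d, op (op a b) (op c d) = op (op a c) (op b d))
    (M : (ℕ → A) → A)
    (hM1 : ∀ α : ℕ → A, M α = op (α 0) (M (fun n => α (n + 1))))
    (hM2 : ∀ α β : ℕ → A, (∀ i, β i = op (α i) (β (i + 1))) → β 0 = M α)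
    (h : A → A)
    (hhom : ∀ a b, h (op a b) = op (h a) (h b)) :
    ∀ α : ℕ → A, h (M α) = M (fun n => h (α n)) :=
  midpoint_hom_is_M_hom_general op M hM1 hM2 h hhom
end
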